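/- If every nontrivial equation over every locally indicable group is solvable over that group, then every nontrivial generalized equation with locally indicable variable group over a locally indicable group is solvable over that group. -/

import Mathlib

universe u v

/-- A group is locally indicable if every nontrivial finitely generated subgroup
admits a surjective homomorphism onto the infinite cyclic group. -/
def LocallyIndicable (G : Type u) [Group G] : Prop :=
  ∀ S : Subgroup G, S ≠ ⊥ → S.FG →
    ∃ f : S →* Multiplicative ℤ, Function.Surjective f

/-- A generalized equation `w ∈ G * T` is nontrivial if `w` is not conjugate in
`G * T` to an element of `G`. -/
def GenEqNontrivial (G : Type u) (T : Type v) [Group G] [Group T]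
    (w : Monoid.Coprod G T) : Prop :=
  ¬ ∃ g : G, IsConj (Monoid.Coprod.inl g) w

/-- A generalized equation `w ∈ G * T` is solvable over `G` if there is a group `G'`
containing `G` as a subgroup (via an injective homomorphism) and a homomorphism
`T →* G'` such that the induced map `G * T →* G'` kills `w`. -/
def GenEqSolvable (G : Type u) (T : Type v) [Group G] [Group T]
    (w : Monoid.Coprod G T) : Prop :=
  ∃ (G' : Type (max u v)) (_ : Group G') (i : G →* G') (f : T →* G'),
    Function.Injective i ∧ Monoid.Coprod.lift i f w = 1

/-!
The homomorphism `G ∗ T → (G × T) ∗ ⟨t⟩`, `g ↦ (g, 1)`, `x ↦ t (1, x) t⁻¹`, turns a generalized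
equation into an equation over the locally indicable group `G × T`, and a solution `t ↦ τ` of the
image gives the solution `x ↦ τ (1, x) τ⁻¹` of the original one. If `w` is conjugate into `T`,
sending `T` to `1` solves it. Otherwise `w` is conjugate to a cyclically reduced word of length at
least two, whose image is again such a word, and such a word is not conjugate into a factor:
its `n`-th power has reduced length `n` times its length, while `u a ^ n u⁻¹` has bounded reduced
length.
-/

open Monoid

namespace Monoid.CoprodI.Word

variable {ι : Type*} {M : ι → Type*} [∀ i, Group (M i)]

def IsCyclicallyReduced (w : Word M) : Prop :=
  2 ≤ w.toList.length → ∀ x ∈ w.toList.getLast?, ∀ y ∈ w.toList.head?, x.1 ≠ y.1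

def ofInfix (w : Word M) {l : List (Σ i, M i)} (h : l <:+: w.toList) : Word M :=
  ⟨l, fun p hp => w.ne_one p (h.subset hp), w.chain_ne.infix h⟩

section Length

variable [∀ i, DecidableEq (M i)]

theorem length_rcons_le {i : ι} (p : Pair M i) :
    (rcons p).toList.length ≤ p.tail.toList.length + 1 := by
  unfold rcons
  split_ifs <;> simp

theorem length_tail_le_length_rcons {i : ι} (p : Pair M i) :
    p.tail.toList.length ≤ (rcons p).toList.length := by
  unfold rcons
  split_ifs <;> simp

variable [DecidableEq ι]

theorem length_smul_le {i : ι} (m : M i) (w : Word M) :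
    (m • w).toList.length ≤ w.toList.length + 1 := by
  rw [smul_def m w]
  refine (length_rcons_le _).trans (Nat.add_le_add_right ?_ 1)
  have h := length_tail_le_length_rcons (equivPair i w)
  rwa [← equivPair_symm, Equiv.symm_apply_apply] at h

theorem length_prod_smul_le (v w : Word M) :
    (v.prod • w).toList.length ≤ v.toList.length + w.toList.length := by
  induction v using consRecOn with
  | empty => simp
  | cons i m v _ _ ih =>
    rw [prod_cons, mul_smul, of_smul_def]
    refine (length_smul_le m _).trans ?_
    simp only [cons_toList, List.length_cons]
    omega

theorem length_equiv_mul_le (x y : CoprodI M) :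
    (equiv (x * y)).toList.length ≤ (equiv x).toList.length + (equiv y).toList.length := by
  have hx : (equiv x).prod = x := equiv.symm_apply_apply x
  calc (equiv (x * y)).toList.length = ((equiv x).prod • equiv y).toList.length := by
        rw [hx]; exact congrArg (fun w : Word M => w.toList.length) (mul_smul x y (empty : Word M))
    _ ≤ _ := length_prod_smul_le _ _

theorem length_equiv_of_le_one {i : ι} (m : M i) : (equiv (of m)).toList.length ≤ 1 :=
  (length_smul_le m empty).trans (by simp)

theorem equiv_prod (w : Word M) : equiv w.prod = w :=
  equiv.apply_symm_apply w

end Length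

theorem exists_isConj_length_lt {w : Word M} (hw : ¬ w.IsCyclicallyReduced) :
    ∃ v : Word M, v.toList.length < w.toList.length ∧ IsConj v.prod w.prod := by
  classical
  simp only [IsCyclicallyReduced, not_forall, not_not] at hw
  obtain ⟨hlen, x, hx, y, hy, hxy⟩ := hw
  obtain ⟨l, hl⟩ : ∃ l, w.toList = y :: l := ⟨_, List.eq_cons_of_mem_head? hy⟩
  obtain ⟨mid, hmid⟩ : ∃ mid, l = mid ++ [x] := by
    rcases l.eq_nil_or_concat' with rfl | ⟨mid, x', rfl⟩
    · simp [hl] at hlen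
    · rw [hl, ← List.cons_append, List.getLast?_concat, Option.mem_some_iff] at hx
      exact ⟨mid, by rw [hx]⟩
  subst hmid
  obtain ⟨i, b⟩ := x
  obtain ⟨j, a⟩ := y
  obtain rfl : i = j := hxy
  have hw : w.toList = [⟨i, a⟩] ++ mid ++ [⟨i, b⟩] := hl
  let v := w.ofInfix (l := mid) (by rw [hw]; exact ⟨_, _, rfl⟩)
  have hv : v.fstIdx ≠ some i := by
    have hchain := w.chain_ne
    rw [hl, List.isChain_cons] at hchain
    exact fstIdx_ne_iff.mpr fun z hz => hchain.1 z (List.mem_head?_append_of_mem_head? hz)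
  have hprod : w.prod = of a * v.prod * of b := by
    simp [prod, hw, v, ofInfix, mul_assoc]
  refine ⟨rcons ⟨b * a, v, hv⟩, ?_, isConj_iff.mpr ⟨(of b)⁻¹, ?_⟩⟩
  · have := length_rcons_le ⟨b * a, v, hv⟩
    simp only [hw, List.length_append, List.length_singleton]
    exact this.trans_lt (by simp [v, ofInfix])
  · rw [prod_rcons, hprod, map_mul]
    group

theorem exists_isCyclicallyReduced_isConj_prod (w : Word M) :
    ∃ v : Word M, v.IsCyclicallyReduced ∧ IsConj v.prod w.prod := by
  by_cases hw : w.IsCyclicallyReduced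
  · exact ⟨w, hw, .refl _⟩
  · obtain ⟨u, hlt, hu⟩ := exists_isConj_length_lt hw
    obtain ⟨v, hv, hvu⟩ := exists_isCyclicallyReduced_isConj_prod u
    exact ⟨v, hv, hvu.trans hu⟩
termination_by w.toList.length

theorem exists_isCyclicallyReduced_isConj (y : CoprodI M) :
    ∃ v : Word M, v.IsCyclicallyReduced ∧ IsConj v.prod y := by
  classical
  have hy : (equiv y).prod = y := equiv.symm_apply_apply y
  simpa only [hy] using exists_isCyclicallyReduced_isConj_prod (equiv y)

theorem IsCyclicallyReduced.exists_prod_eq_pow {w : Word M} (hw : w.IsCyclicallyReduced)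
    (hlen : 2 ≤ w.toList.length) (n : ℕ) :
    ∃ v : Word M, v.toList.length = n * w.toList.length ∧ v.prod = w.prod ^ n := by
  have hne : [] ∉ List.replicate n w.toList := fun h => by
    rw [← (List.mem_replicate.mp h).2] at hlen; simp at hlen
  refine ⟨⟨(List.replicate n w.toList).flatten, fun p hp => ?_, ?_⟩, ?_, ?_⟩
  · obtain ⟨l, hl, hp⟩ := List.mem_flatten.mp hp
    rw [(List.mem_replicate.mp hl).2] at hp
    exact w.ne_one p hp
  · rw [List.isChain_flatten hne]
    refine ⟨fun l hl => ?_, List.isChain_replicate_of_rel n (hw hlen)⟩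
    rw [(List.mem_replicate.mp hl).2]
    exact w.chain_ne
  · simp
  · simp [prod, List.map_flatten, List.prod_flatten, List.map_replicate, List.prod_replicate]

theorem IsCyclicallyReduced.not_isConj_of {w : Word M} (hw : w.IsCyclicallyReduced)
    (hlen : 2 ≤ w.toList.length) {i : ι} (m : M i) : ¬ IsConj (of m) w.prod := by
  classical
  intro hconj
  obtain ⟨u, hu⟩ := isConj_iff.mp hconj
  set k := (equiv u).toList.length + 1 + (equiv u⁻¹).toList.length
  obtain ⟨v, hvlen, hvprod⟩ := hw.exists_prod_eq_pow hlen k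
  have hv : v.prod = u * of (m ^ k) * u⁻¹ := by rw [hvprod, ← hu, conj_pow, map_pow]
  have : k * w.toList.length ≤ k :=
    calc k * w.toList.length = (equiv v.prod).toList.length := by rw [equiv_prod, hvlen]
      _ ≤ (equiv (u * of (m ^ k))).toList.length + (equiv u⁻¹).toList.length := by
        rw [hv]; exact length_equiv_mul_le _ _
      _ ≤ k := by
        have := length_equiv_mul_le u (of (m ^ k))
        have := length_equiv_of_le_one (m ^ k)
        omega
  have hk : 1 ≤ k := by simp only [k]; omega
  nlinarith

end Monoid.CoprodI.Word

namespace GenEq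

open Monoid.CoprodI

variable (G : Type u) (T : Type v) [Group G] [Group T]

-- `Monoid.CoprodI` needs a family in a single universe, hence the `ULift`s.
def factors : Bool → Type (max u v)
  | true => ULift.{v} G
  | false => ULift.{u} T

def encodedFactors : Bool → Type (max u v)
  | true => G × T
  | false => ULift.{max u v} (Multiplicative ℤ)

instance (b : Bool) : Group (factors G T b) := by cases b <;> (dsimp [factors]; infer_instance)

instance (b : Bool) : Group (encodedFactors G T b) := by
  cases b <;> (dsimp [encodedFactors]; infer_instance)

def toCoprodI : Coprod G T →* CoprodI (factors G T) :=
  Coprod.lift ((of (i := true)).comp MulEquiv.ulift.symm.toMonoidHom)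
    ((of (i := false)).comp MulEquiv.ulift.symm.toMonoidHom)

def ofCoprodI : CoprodI (factors G T) →* Coprod G T :=
  lift fun
    | true => Coprod.inl.comp MulEquiv.ulift.toMonoidHom
    | false => Coprod.inr.comp MulEquiv.ulift.toMonoidHom

theorem ofCoprodI_toCoprodI (w : Coprod G T) : ofCoprodI G T (toCoprodI G T w) = w := by
  have : (ofCoprodI G T).comp (toCoprodI G T) = MonoidHom.id _ := by
    apply Coprod.hom_ext <;> ext <;> rfl
  exact DFunLike.congr_fun this w

def encode : Coprod G T →* Coprod (G × T) (Multiplicative ℤ) :=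
  Coprod.lift (Coprod.inl.comp (MonoidHom.inl G T))
    ((MulAut.conj (Coprod.inr (Multiplicative.ofAdd 1))).toMonoidHom.comp
      (Coprod.inl.comp (MonoidHom.inr G T)))

def encodedToCoprodI : Coprod (G × T) (Multiplicative ℤ) →* CoprodI (encodedFactors G T) :=
  Coprod.lift (of (M := encodedFactors G T) (i := true))
    ((of (i := false)).comp MulEquiv.ulift.symm.toMonoidHom)

def encodeLetter : (Σ b, factors G T b) → List (Σ b, encodedFactors G T b)
  | ⟨true, g⟩ => [⟨true, ((g.down, 1) : G × T)⟩]
  | ⟨false, x⟩ => [⟨false, ULift.up (Multiplicative.ofAdd 1)⟩, ⟨true, ((1, x.down) : G × T)⟩,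
      ⟨false, (ULift.up (Multiplicative.ofAdd 1))⁻¹⟩]

variable {G T}

theorem encodedToCoprodI_encode_ofCoprodI_of (a : Σ b, factors G T b) :
    encodedToCoprodI G T (encode G T (ofCoprodI G T (of a.2)))
      = ((encodeLetter G T a).map fun p => of p.2).prod := by
  obtain ⟨_ | _, m⟩ := a <;> rfl

theorem fst_of_mem_head?_encodeLetter {a : Σ b, factors G T b}
    {x : Σ b, encodedFactors G T b} (hx : x ∈ (encodeLetter G T a).head?) : x.1 = a.1 := by
  obtain ⟨_ | _, m⟩ := a <;> simp [encodeLetter] at hx <;> rw [← hx]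

theorem fst_of_mem_getLast?_encodeLetter {a : Σ b, factors G T b}
    {x : Σ b, encodedFactors G T b} (hx : x ∈ (encodeLetter G T a).getLast?) : x.1 = a.1 := by
  obtain ⟨_ | _, m⟩ := a <;> simp [encodeLetter] at hx <;> rw [← hx]

theorem encodeLetter_ne_nil (a : Σ b, factors G T b) : encodeLetter G T a ≠ [] := by
  obtain ⟨_ | _, m⟩ := a <;> simp [encodeLetter]

theorem ne_one_of_mem_encodeLetter {a : Σ b, factors G T b} (ha : a.2 ≠ 1)
    {p : Σ b, encodedFactors G T b} (hp : p ∈ encodeLetter G T a) : p.2 ≠ 1 := by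
  have hofAdd : (ULift.up (Multiplicative.ofAdd 1) : ULift.{max u v} (Multiplicative ℤ)) ≠ 1 :=
    fun h => absurd (congrArg ULift.down h) (by decide)
  obtain ⟨_ | _, m⟩ := a
  · simp only [encodeLetter, List.mem_cons, List.not_mem_nil, or_false] at hp
    rcases hp with rfl | rfl | rfl
    · exact hofAdd
    · exact fun h => ha (ULift.down_injective (congrArg Prod.snd h))
    · exact inv_ne_one.mpr hofAdd
  · simp only [encodeLetter, List.mem_singleton] at hp
    subst hp
    exact fun h => ha (ULift.down_injective (congrArg Prod.fst h))

theorem isChain_encodeLetter (a : Σ b, factors G T b) :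
    (encodeLetter G T a).IsChain fun p q => p.1 ≠ q.1 := by
  obtain ⟨_ | _, m⟩ := a <;> simp [encodeLetter]

theorem exists_fst_eq_of_mem_head?_flatMap_encodeLetter {l : List (Σ b, factors G T b)}
    {x : Σ b, encodedFactors G T b} (hx : x ∈ (l.flatMap (encodeLetter G T)).head?) :
    ∃ a ∈ l.head?, x.1 = a.1 := by
  cases l with
  | nil => simp at hx
  | cons a l =>
    rw [List.flatMap_cons, List.head?_append_of_ne_nil _ (encodeLetter_ne_nil a)] at hx
    exact ⟨a, rfl, fst_of_mem_head?_encodeLetter hx⟩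

theorem exists_fst_eq_of_mem_getLast?_flatMap_encodeLetter {l : List (Σ b, factors G T b)}
    {x : Σ b, encodedFactors G T b} (hx : x ∈ (l.flatMap (encodeLetter G T)).getLast?) :
    ∃ a ∈ l.getLast?, x.1 = a.1 := by
  rcases l.eq_nil_or_concat' with rfl | ⟨l, a, rfl⟩
  · simp at hx
  · rw [List.flatMap_append, List.flatMap_singleton,
      List.getLast?_append_of_ne_nil _ (encodeLetter_ne_nil a)] at hx
    exact ⟨a, by simp, fst_of_mem_getLast?_encodeLetter hx⟩

def encodeWord (w : Word (factors G T)) : Word (encodedFactors G T) where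
  toList := w.toList.flatMap (encodeLetter G T)
  ne_one p hp := by
    obtain ⟨a, ha, hp⟩ := List.mem_flatMap.mp hp
    exact ne_one_of_mem_encodeLetter (w.ne_one a ha) hp
  chain_ne := by
    have hne : [] ∉ w.toList.map (encodeLetter G T) := by
      intro h
      obtain ⟨a, -, ha⟩ := List.mem_map.mp h
      exact encodeLetter_ne_nil a ha
    rw [List.flatMap, List.isChain_flatten hne]
    refine ⟨fun l hl => ?_, List.isChain_map_of_isChain _ (fun a b hab x hx y hy => ?_) w.chain_ne⟩
    · obtain ⟨a, -, rfl⟩ := List.mem_map.mp hl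
      exact isChain_encodeLetter a
    · rwa [fst_of_mem_getLast?_encodeLetter hx, fst_of_mem_head?_encodeLetter hy]

theorem length_le_length_encodeWord (w : Word (factors G T)) :
    w.toList.length ≤ (encodeWord w).toList.length := by
  change _ ≤ (w.toList.flatMap (encodeLetter G T)).length
  induction w.toList with
  | nil => simp
  | cons a l ih =>
    have := List.length_pos_iff.mpr (encodeLetter_ne_nil a)
    simp only [List.flatMap_cons, List.length_append, List.length_cons]
    omega

theorem prod_encodeWord (w : Word (factors G T)) :
    (encodeWord w).prod = encodedToCoprodI G T (encode G T (ofCoprodI G T w.prod)) := by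
  let φ := (encodedToCoprodI G T).comp ((encode G T).comp (ofCoprodI G T))
  change _ = φ (w.toList.map fun a => of a.2).prod
  rw [map_list_prod, List.map_map]
  simp only [Word.prod, encodeWord, List.flatMap, List.map_flatten, List.prod_flatten, List.map_map]
  congr 1
  exact List.map_congr_left fun a _ => (encodedToCoprodI_encode_ofCoprodI_of a).symm

theorem isCyclicallyReduced_encodeWord {w : Word (factors G T)}
    (hw : w.IsCyclicallyReduced) (hlen : 2 ≤ w.toList.length) :
    (encodeWord w).IsCyclicallyReduced := by
  intro _ x hx y hy
  obtain ⟨x', hx', hxx'⟩ := exists_fst_eq_of_mem_getLast?_flatMap_encodeLetter hx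
  obtain ⟨y', hy', hyy'⟩ := exists_fst_eq_of_mem_head?_flatMap_encodeLetter hy
  rw [hxx', hyy']
  exact hw hlen x' hx' y' hy'

theorem ofCoprodI_prod_of_length_le_one {v : Word (factors G T)} (hv : v.toList.length ≤ 1) :
    (∃ g, ofCoprodI G T v.prod = Coprod.inl g) ∨ ∃ x, ofCoprodI G T v.prod = Coprod.inr x := by
  obtain ⟨_ | ⟨⟨_ | _, m⟩, _ | _⟩, _, _⟩ := v
  · exact .inl ⟨1, (map_one _).trans (map_one _).symm⟩
  · exact .inr ⟨m.down, by simp only [Word.prod]; rfl⟩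
  · simp at hv
  · exact .inl ⟨m.down, by simp only [Word.prod]; rfl⟩
  · simp at hv

theorem genEqNontrivial_encode {w : Coprod G T} (hG : GenEqNontrivial G T w)
    (hT : ¬ ∃ x : T, IsConj (Coprod.inr x) w) :
    GenEqNontrivial (G × T) (Multiplicative ℤ) (encode G T w) := by
  obtain ⟨v, hv, hvw⟩ := Word.exists_isCyclicallyReduced_isConj (toCoprodI G T w)
  replace hvw : IsConj (ofCoprodI G T v.prod) w := by
    simpa only [ofCoprodI_toCoprodI] using (ofCoprodI G T).map_isConj hvw
  rcases le_or_gt v.toList.length 1 with hshort | hlong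
  · rcases ofCoprodI_prod_of_length_le_one hshort with ⟨g, hg⟩ | ⟨x, hx⟩
    · exact absurd ⟨g, hg ▸ hvw⟩ hG
    · exact absurd ⟨x, hx ▸ hvw⟩ hT
  · rintro ⟨p, hp⟩
    have hencode := ((encodedToCoprodI G T).comp (encode G T)).map_isConj hvw
    rw [MonoidHom.comp_apply, MonoidHom.comp_apply, ← prod_encodeWord] at hencode
    exact (isCyclicallyReduced_encodeWord hv hlong).not_isConj_of
      (hlong.trans_le (length_le_length_encodeWord v)) (i := true) p
      (((encodedToCoprodI G T).map_isConj hp).trans hencode.symm)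

theorem genEqSolvable_of_encode {w : Coprod G T}
    (h : GenEqSolvable (G × T) (Multiplicative ℤ) (encode G T w)) : GenEqSolvable G T w := by
  obtain ⟨G', _, i, f, hi, hw⟩ := h
  refine ⟨G', _, i.comp (MonoidHom.inl G T),
    (MulAut.conj (f (Multiplicative.ofAdd 1))).toMonoidHom.comp (i.comp (MonoidHom.inr G T)),
    hi.comp (Prod.mk_left_injective 1), ?_⟩
  have hfactor : Coprod.lift (i.comp (MonoidHom.inl G T))
      ((MulAut.conj (f (Multiplicative.ofAdd 1))).toMonoidHom.comp (i.comp (MonoidHom.inr G T)))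
        = (Coprod.lift i f).comp (encode G T) := by
    apply Coprod.hom_ext <;> ext <;> simp [encode]
  rw [hfactor, MonoidHom.comp_apply, hw]

end GenEq

theorem genEqSolvable_of_isConj_inr {G : Type u} {T : Type v} [Group G] [Group T]
    {w : Monoid.Coprod G T} (h : ∃ x : T, IsConj (Monoid.Coprod.inr x) w) :
    GenEqSolvable G T w := by
  obtain ⟨x, hx⟩ := h
  refine ⟨ULift.{v} G, inferInstance, (MulEquiv.ulift (α := G)).symm.toMonoidHom, 1,
    (MulEquiv.ulift (α := G)).symm.injective, ?_⟩
  have := (Monoid.Coprod.lift (MulEquiv.ulift (α := G)).symm.toMonoidHom 1).map_isConj hx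
  rwa [Monoid.Coprod.lift_apply_inr, MonoidHom.one_apply, isConj_one_right] at this

theorem Subgroup.FG.map {G H : Type*} [Group G] [Group H] {S : Subgroup G} (hS : S.FG)
    (f : G →* H) : (S.map f).FG := by
  obtain ⟨s, hs, hfin⟩ := (Subgroup.fg_iff _).mp hS
  exact (Subgroup.fg_iff _).mpr ⟨f '' s, by rw [← hs, MonoidHom.map_closure], hfin.image f⟩

theorem LocallyIndicable.exists_surjective_of_map_ne_bot {G H : Type*} [Group G] [Group H]
    (hH : LocallyIndicable H) (f : G →* H) {S : Subgroup G} (hS : S.FG) (hf : S.map f ≠ ⊥) :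
    ∃ φ : S →* Multiplicative ℤ, Function.Surjective φ := by
  obtain ⟨φ, hφ⟩ := hH _ hf (hS.map f)
  exact ⟨φ.comp (f.subgroupMap S), hφ.comp (f.subgroupMap_surjective S)⟩

theorem LocallyIndicable.prod {G T : Type*} [Group G] [Group T]
    (hG : LocallyIndicable G) (hT : LocallyIndicable T) : LocallyIndicable (G × T) := by
  intro S hS hSfg
  by_cases hfst : S.map (MonoidHom.fst G T) = ⊥
  · refine hT.exists_surjective_of_map_ne_bot (MonoidHom.snd G T) hSfg fun hsnd => hS ?_
    rw [Subgroup.map_eq_bot_iff] at hfst hsnd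
    exact (Subgroup.eq_bot_iff_forall _).mpr fun p hp => Prod.ext (hfst hp) (hsnd hp)
  · exact hG.exists_surjective_of_map_ne_bot _ hSfg hfst

/-- If every nontrivial equation over every locally indicable group is solvable over
that group, then every nontrivial generalized equation with locally indicable
variable group over a locally indicable group is solvable over that group. -/
theorem brodskii_implies_generalized_brodskii
    (brodskii : ∀ (G : Type (max u v)) [Group G], LocallyIndicable G →
      ∀ w : Monoid.Coprod G (Multiplicative ℤ),
        GenEqNontrivial G (Multiplicative ℤ) w → GenEqSolvable G (Multiplicative ℤ) w) :
    ∀ (G : Type u) (T : Type v) [Group G] [Group T],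
      LocallyIndicable G → LocallyIndicable T →
      ∀ w : Monoid.Coprod G T, GenEqNontrivial G T w → GenEqSolvable G T w := by
  intro G T _ _ hG hT w hw
  by_cases hx : ∃ x : T, IsConj (Monoid.Coprod.inr x) w
  · exact genEqSolvable_of_isConj_inr hx
  · exact GenEq.genEqSolvable_of_encode
      (brodskii _ (hG.prod hT) _ (GenEq.genEqNontrivial_encode hw hx))
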